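/- Assume the bilevel setting: g : ℝ^d × ℝ^p → ℝ is differentiable with ∇_x g and ∇_y g each L_g-Lipschitz in each variable; for every x, g(x,·) attains its minimum G(x) at y*(x), satisfies the μ-PL condition ‖∇_y g(x, y)‖² ≥ 2μ (g(x, y) − G(x)) and the quadratic growth condition g(x, y) − G(x) ≥ (μ/2)‖y − y*(x)‖² for all y, with 0 < μ ≤ L_g; G is differentiable with ∇G(x) = ∇_x g(x, y*(x)) and ∇G is L_G-Lipschitz with L_G ≥ max{L_g, L_g²/(2μ)}; F : ℝ^d → ℝ is differentiable with L_F-Lipschitz gradient; h : ℝ^d → ℝ is convex; Φ = F + h; and L̂ > 0. Let sequences (x_t, y_t, w_t, A_t, B_t) satisfy: A_t ∈ ℝ^{d×d} symmetric with A_t ⪰ ρ I_d; B_t ∈ ℝ^{p×p} symmetric with ρ_l I_p ⪯ B_t ⪯ ρ_u I_p, with ρ_l = ρ ∈ (0,1) and ρ_l ρ_u ≥ 1; x_{t+1} = argmin_{z ∈ ℝ^d}{ ⟨w_t, z⟩ + (1/(2γ))(z − x_t)ᵀ A_t (z − x_t) + h(z) }; y_{t+1} = y_t − λ B_t^{-1}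 ∇_y g(x_t, y_t); and the hypergradient estimation error bound ‖w_t − ∇F(x_t)‖² ≤ (2 L̂²/μ)(g(x_t, y_t) − G(x_t)) holds for every t. If 0 < γ ≤ min{ 3ρ/(4 L_F), ρλμ²/(8 ρ_u L̂²), λμρ_l/(16 L_G ρ_u), μρ_l/(16 L_g² ρ_u) } and 0 < λ ≤ 1/(2 L_g ρ_u), then with the Lyapunov function Ω_t = Φ(x_t) + g(x_t, y_t) − G(x_t) and the gradient mapping 𝒢(x_t, w_t, γ) = (x_t − x_{t+1})/γ, for every t: Ω_{t+1} − Ω_t ≤ −(λμ/(4ρ_u)) (g(x_t, y_t) − G(x_t)) − (ργ/4) ‖𝒢(x_t, w_t, γ)‖². -/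

import Mathlib

open scoped RealInnerProductSpace
open Filter Topology

/-!
Write `D = x_{t+1} - x_t` and `δ_t = g(x_t, y_t) - G(x_t)`. The descent lemma for `F` and the
optimality of the proximal step give
`Φ(x_{t+1}) - Φ(x_t) ≤ ‖w_t - ∇F(x_t)‖ ‖D‖ + (L_F/2 - ρ/γ) ‖D‖²`.
Moving `x` with `y_{t+1}` fixed changes the gap `g - G` by at most
`L_g ‖y_{t+1} - y*(x_t)‖ ‖D‖ + (L_g + L_G)/2 ‖D‖²` (descent lemmas for `g(·, y)` and `-G`), while
the preconditioned gradient step in `y` contracts the gap by the factor `1 - 3λμ/(2ρ_u)` thanks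
to the PL inequality. Both cross terms are split by Young's inequality and absorbed, one by the
hypergradient error bound, the other by quadratic growth; the step-size conditions then leave
a coefficient of at most `-ρ/(4γ)` in front of `‖D‖²`.
-/

theorem le_of_forall_le_add_mul {a b c : ℝ} (h : ∀ θ ∈ Set.Ioc (0 : ℝ) 1, a ≤ b + θ * c) :
    a ≤ b := by
  have hlim : Tendsto (fun θ : ℝ => b + θ * c) (𝓝[>] 0) (𝓝 b) :=
    tendsto_nhdsWithin_of_tendsto_nhds
      ((by fun_prop : Continuous fun θ : ℝ => b + θ * c).tendsto' 0 b (by simp))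
  exact ge_of_tendsto hlim (eventually_of_mem (Ioc_mem_nhdsGT zero_lt_one) h)

theorem mul_le_half_mul_sq_add_sq_div {a b k : ℝ} (hk : 0 < k) :
    a * b ≤ k / 2 * a ^ 2 + b ^ 2 / (2 * k) := by
  have h : k / 2 * a ^ 2 + b ^ 2 / (2 * k) - a * b = (k * a - b) ^ 2 / (2 * k) := by
    field_simp
    ring
  nlinarith [div_nonneg (sq_nonneg (k * a - b)) (by positivity : (0 : ℝ) ≤ 2 * k)]

theorem le_add_deriv_add_of_deriv_le {φ φ' : ℝ → ℝ} {K : ℝ}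
    (hφ : ∀ τ, HasDerivAt φ (φ' τ) τ) (hφ' : ∀ τ ∈ Set.Ioo (0 : ℝ) 1, φ' τ ≤ φ' 0 + K * τ) :
    φ 1 ≤ φ 0 + φ' 0 + K / 2 := by
  set ψ : ℝ → ℝ := fun τ => φ 0 + τ * φ' 0 + K / 2 * τ ^ 2 - φ τ with hψ_def
  have hψ : ∀ τ, HasDerivAt ψ (φ' 0 + K * τ - φ' τ) τ := fun τ => by
    refine (((((hasDerivAt_id τ).mul_const (φ' 0)).const_add (φ 0)).add
      ((hasDerivAt_pow 2 τ).const_mul (K / 2))).sub (hφ τ)).congr_deriv ?_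
    push_cast
    ring
  have hmono : MonotoneOn ψ (Set.Icc 0 1) :=
    monotoneOn_of_hasDerivWithinAt_nonneg (convex_Icc 0 1)
      (fun τ _ => (hψ τ).continuousAt.continuousWithinAt) (fun τ _ => (hψ τ).hasDerivWithinAt)
      (fun τ hτ => by rw [interior_Icc] at hτ; linarith [hφ' τ hτ])
  have h01 := hmono (Set.left_mem_Icc.2 zero_le_one) (Set.right_mem_Icc.2 zero_le_one) zero_le_one
  simp only [hψ_def] at h01
  linarith

section InnerProductSpace

variable {E : Type*} [NormedAddCommGroup E] [InnerProductSpace ℝ E]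

theorem HasGradientAt.neg [CompleteSpace E] {f : E → ℝ} {f' z : E} (hf : HasGradientAt f f' z) :
    HasGradientAt (fun z' => -f z') (-f') z := by
  rw [hasGradientAt_iff_hasFDerivAt, map_neg]
  exact hf.hasFDerivAt.neg

theorem image_le_add_inner_add_sq_of_lipschitz_gradient [CompleteSpace E] {f : E → ℝ}
    {f' : E → E} {L : ℝ} (hf : ∀ z, HasGradientAt f (f' z) z)
    (hL : ∀ z₁ z₂, ‖f' z₁ - f' z₂‖ ≤ L * ‖z₁ - z₂‖) (a b : E) :
    f b ≤ f a + ⟪f' a, b - a⟫ + L / 2 * ‖b - a‖ ^ 2 := by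
  set v := b - a
  have hline (τ : ℝ) :
      HasDerivAt (fun σ : ℝ => f (a + σ • v)) ⟪f' (a + τ • v), v⟫ τ := by
    have := (hf (a + τ • v)).hasFDerivAt.comp_hasDerivAt τ
      (((hasDerivAt_id τ).smul_const v).const_add a)
    simp only [Function.comp_def, InnerProductSpace.toDual_apply_apply, id, one_smul] at this
    exact this
  have key := le_add_deriv_add_of_deriv_le (K := L * ‖v‖ ^ 2) hline fun τ hτ => by
    simp only [zero_smul, add_zero]
    calc ⟪f' (a + τ • v), v⟫ = ⟪f' a, v⟫ + ⟪f' (a + τ • v) - f' a, v⟫ := by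
          rw [inner_sub_left]; ring
      _ ≤ ⟪f' a, v⟫ + L * ‖τ • v‖ * ‖v‖ := by
          gcongr
          exact (real_inner_le_norm _ _).trans
            (mul_le_mul_of_nonneg_right (by simpa using hL (a + τ • v) a) (norm_nonneg v))
      _ = ⟪f' a, v⟫ + L * ‖v‖ ^ 2 * τ := by
          rw [norm_smul, Real.norm_of_nonneg hτ.1.le]; ring
  simpa [v, mul_div_right_comm] using key

theorem add_inner_sub_sq_le_image_of_lipschitz_gradient [CompleteSpace E] {f : E → ℝ}
    {f' : E → E} {L : ℝ} (hf : ∀ z, HasGradientAt f (f' z) z)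
    (hL : ∀ z₁ z₂, ‖f' z₁ - f' z₂‖ ≤ L * ‖z₁ - z₂‖) (a b : E) :
    f a + ⟪f' a, b - a⟫ - L / 2 * ‖b - a‖ ^ 2 ≤ f b := by
  have := image_le_add_inner_add_sq_of_lipschitz_gradient (fun z => (hf z).neg)
    (fun z₁ z₂ => by rw [neg_sub_neg, norm_sub_rev]; exact hL z₁ z₂) a b
  simp only [inner_neg_left] at this
  linarith

theorem norm_sq_apply_le_mul_inner_apply_self {T : E →L[ℝ] E} {c : ℝ}
    (hsymm : ∀ v w, ⟪T v, w⟫ = ⟪v, T w⟫) (hpos : ∀ v, 0 ≤ ⟪T v, v⟫)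
    (hle : ∀ v, ⟪T v, v⟫ ≤ c * ‖v‖ ^ 2) (s : E) : ‖T s‖ ^ 2 ≤ c * ⟪T s, s⟫ := by
  set u := T s
  -- Cauchy–Schwarz for the semi-inner product `⟪T ·, ·⟫`, evaluated at `s` and `u = T s`
  have hCS : ‖u‖ ^ 2 * ‖u‖ ^ 2 ≤ ⟪T u, u⟫ * ⟪T s, s⟫ := by
    have hdisc := discrim_le_zero (a := ⟪T u, u⟫) (b := 2 * ‖u‖ ^ 2) (c := ⟪T s, s⟫)
      fun θ => by
        have hexp : ⟪T (s + θ • u), s + θ • u⟫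
            = ⟪T u, u⟫ * (θ * θ) + 2 * ‖u‖ ^ 2 * θ + ⟪T s, s⟫ := by
          have hus : ⟪T u, s⟫ = ‖u‖ ^ 2 := by rw [hsymm, real_inner_self_eq_norm_sq]
          simp only [map_add, map_smul, inner_add_left, inner_add_right, real_inner_smul_left,
            real_inner_smul_right, hus, u, real_inner_self_eq_norm_sq]
          ring
        exact hexp ▸ hpos _
    rw [discrim] at hdisc
    nlinarith
  rcases (sq_nonneg ‖u‖).eq_or_lt with hu | hu
  · have hu0 : u = 0 := by simpa using hu.symm
    simp [hu0, u]
  · exact le_of_mul_le_mul_left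
      (by nlinarith [mul_le_mul_of_nonneg_right (hle u) (hpos s)]) hu

theorem ConvexOn.sub_le_of_forall_prox_le {h : E → ℝ} (hconv : ConvexOn ℝ Set.univ h)
    {w x x' : E} {A : E →L[ℝ] E} {γ : ℝ}
    (hmin : ∀ z, ⟪w, x'⟫ + (1 / (2 * γ)) * ⟪A (x' - x), x' - x⟫ + h x'
      ≤ ⟪w, z⟫ + (1 / (2 * γ)) * ⟪A (z - x), z - x⟫ + h z) :
    h x' - h x ≤ ⟪w, x - x'⟫ - (1 / γ) * ⟪A (x' - x), x' - x⟫ := by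
  set Q := ⟪A (x' - x), x' - x⟫
  -- compare with the competitor `z = x' + θ (x - x')` and let `θ → 0⁺`
  refine le_of_forall_le_add_mul (c := Q / (2 * γ)) fun θ hθ => ?_
  have hz := hmin (x' + θ • (x - x'))
  have hquad : ⟪A (x' + θ • (x - x') - x), x' + θ • (x - x') - x⟫ = (1 - θ) ^ 2 * Q := by
    rw [show x' + θ • (x - x') - x = (1 - θ) • (x' - x) by module, map_smul,
      real_inner_smul_left, real_inner_smul_right]
    ring
  have hlin : ⟪w, x' + θ • (x - x')⟫ = ⟪w, x'⟫ + θ * ⟪w, x - x'⟫ := by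
    rw [inner_add_right, real_inner_smul_right]
  have hconvex : h (x' + θ • (x - x')) ≤ (1 - θ) * h x' + θ * h x := by
    have := hconv.2 (Set.mem_univ x') (Set.mem_univ x) (sub_nonneg.2 hθ.2) hθ.1.le (by ring)
    rwa [show (1 - θ) • x' + θ • x = x' + θ • (x - x') by module] at this
  rw [hquad, hlin] at hz
  have hscaled : θ * (h x' - h x)
      ≤ θ * (⟪w, x - x'⟫ - (1 / γ) * Q + θ * (Q / (2 * γ))) := by
    have e : 1 / (2 * γ) * ((1 - θ) ^ 2 * Q)
        = 1 / (2 * γ) * Q + θ * (-(1 / γ) * Q + θ * (Q / (2 * γ))) := by ring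
    linarith
  exact le_of_mul_le_mul_left hscaled hθ.1

theorem add_sub_le_of_prox_gradient_step [CompleteSpace E] {f h : E → ℝ} {f' : E → E}
    {L ρ γ : ℝ} (hf : ∀ z, HasGradientAt f (f' z) z)
    (hL : ∀ z₁ z₂, ‖f' z₁ - f' z₂‖ ≤ L * ‖z₁ - z₂‖) (hconv : ConvexOn ℝ Set.univ h)
    {A : E →L[ℝ] E} (hA : ∀ v, ρ * ‖v‖ ^ 2 ≤ ⟪A v, v⟫) (hγ : 0 < γ) {w x x' : E}
    (hmin : ∀ z, ⟪w, x'⟫ + (1 / (2 * γ)) * ⟪A (x' - x), x' - x⟫ + h x'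
      ≤ ⟪w, z⟫ + (1 / (2 * γ)) * ⟪A (z - x), z - x⟫ + h z) :
    f x' + h x' - (f x + h x) ≤ ‖w - f' x‖ * ‖x' - x‖ + (L / 2 - ρ / γ) * ‖x' - x‖ ^ 2 := by
  have hdesc := image_le_add_inner_add_sq_of_lipschitz_gradient hf hL x x'
  have hprox := hconv.sub_le_of_forall_prox_le hmin
  have hquad : ρ / γ * ‖x' - x‖ ^ 2 ≤ 1 / γ * ⟪A (x' - x), x' - x⟫ :=
    calc ρ / γ * ‖x' - x‖ ^ 2 = 1 / γ * (ρ * ‖x' - x‖ ^ 2) := by ring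
      _ ≤ 1 / γ * ⟪A (x' - x), x' - x⟫ := by gcongr; exact hA _
  have herr : ⟪f' x, x' - x⟫ + ⟪w, x - x'⟫ ≤ ‖w - f' x‖ * ‖x' - x‖ :=
    calc ⟪f' x, x' - x⟫ + ⟪w, x - x'⟫ = ⟪w - f' x, x - x'⟫ := by
          rw [inner_sub_left, ← neg_sub x x', inner_neg_right]; ring
      _ ≤ ‖w - f' x‖ * ‖x - x'‖ := real_inner_le_norm _ _
      _ = ‖w - f' x‖ * ‖x' - x‖ := by rw [norm_sub_rev x]
  linarith

theorem sub_le_of_preconditioned_gradient_step [CompleteSpace E] {φ : E → ℝ} {φ' : E → E}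
    {L ρ ρu lam : ℝ} (hφ : ∀ z, HasGradientAt φ (φ' z) z)
    (hL : ∀ z₁ z₂, ‖φ' z₁ - φ' z₂‖ ≤ L * ‖z₁ - z₂‖) {B : E →L[ℝ] E}
    (hBsymm : ∀ v w, ⟪B v, w⟫ = ⟪v, B w⟫) (hBl : ∀ v, ρ * ‖v‖ ^ 2 ≤ ⟪B v, v⟫)
    (hBu : ∀ v, ⟪B v, v⟫ ≤ ρu * ‖v‖ ^ 2) (hρ : 0 < ρ) (hρu : 0 ≤ ρu) (hlam : 0 < lam)
    (hlamL : 2 * lam * L ≤ ρ) {y y' : E} (hstep : B (y - y') = lam • φ' y) :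
    ρu * (φ y' - φ y) ≤ -(3 / 4) * lam * ‖φ' y‖ ^ 2 := by
  have hdesc := image_le_add_inner_add_sq_of_lipschitz_gradient hφ hL y y'
  rw [norm_sub_rev] at hdesc
  have hinner : lam * ⟪φ' y, y' - y⟫ = -⟪B (y - y'), y - y'⟫ := by
    rw [hstep, real_inner_smul_left, ← neg_sub y y', inner_neg_right, mul_neg]
  have hdecr : lam * (φ y' - φ y) ≤ -(3 / 4) * ⟪B (y - y'), y - y'⟫ := by
    nlinarith [mul_le_mul_of_nonneg_left hdesc hlam.le,
      mul_le_mul_of_nonneg_right hlamL (sq_nonneg ‖y - y'‖), hBl (y - y')]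
  have hnorm : lam ^ 2 * ‖φ' y‖ ^ 2 ≤ ρu * ⟪B (y - y'), y - y'⟫ :=
    calc lam ^ 2 * ‖φ' y‖ ^ 2 = ‖B (y - y')‖ ^ 2 := by
          rw [hstep, norm_smul, Real.norm_of_nonneg hlam.le, mul_pow]
      _ ≤ ρu * ⟪B (y - y'), y - y'⟫ := norm_sq_apply_le_mul_inner_apply_self hBsymm
          (fun v => (mul_nonneg hρ.le (sq_nonneg _)).trans (hBl v)) hBu _
  refine le_of_mul_le_mul_left ?_ hlam
  nlinarith [mul_le_mul_of_nonneg_left hdecr hρu]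

theorem sub_le_mul_sub_of_preconditioned_gradient_step_of_pl [CompleteSpace E] {φ : E → ℝ}
    {φ' : E → E} {L μ m ρ ρu lam : ℝ} (hφ : ∀ z, HasGradientAt φ (φ' z) z)
    (hL : ∀ z₁ z₂, ‖φ' z₁ - φ' z₂‖ ≤ L * ‖z₁ - z₂‖) {B : E →L[ℝ] E}
    (hBsymm : ∀ v w, ⟪B v, w⟫ = ⟪v, B w⟫) (hBl : ∀ v, ρ * ‖v‖ ^ 2 ≤ ⟪B v, v⟫)
    (hBu : ∀ v, ⟪B v, v⟫ ≤ ρu * ‖v‖ ^ 2) (hρ : 0 < ρ) (hρu : 0 < ρu) (hlam : 0 < lam)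
    (hlamL : 2 * lam * L ≤ ρ) {y y' : E} (hstep : B (y - y') = lam • φ' y)
    (hPL : 2 * μ * (φ y - m) ≤ ‖φ' y‖ ^ 2) :
    φ y' - m ≤ (1 - 3 / 2 * (lam * μ / ρu)) * (φ y - m) := by
  have hdecr := sub_le_of_preconditioned_gradient_step hφ hL hBsymm hBl hBu hρ hρu.le hlam
    hlamL hstep
  have hrhs : ρu * ((1 - 3 / 2 * (lam * μ / ρu)) * (φ y - m))
      = ρu * (φ y - m) - 3 / 2 * lam * (μ * (φ y - m)) := by
    field_simp
  rw [← mul_le_mul_iff_of_pos_left hρu, hrhs]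
  nlinarith [mul_le_mul_of_nonneg_left hPL hlam.le]

variable {F : Type*} [NormedAddCommGroup F]

theorem sub_le_of_lipschitz_partial_gradient [CompleteSpace E] {g : E → F → ℝ}
    {gx : E → F → E} {G : E → ℝ} {ystar : E → F} {L LG : ℝ}
    (hgx : ∀ x y, HasGradientAt (fun x' => g x' y) (gx x y) x)
    (hgxlipy : ∀ x y₁ y₂, ‖gx x y₁ - gx x y₂‖ ≤ L * ‖y₁ - y₂‖)
    (hgxlipx : ∀ x₁ x₂ y, ‖gx x₁ y - gx x₂ y‖ ≤ L * ‖x₁ - x₂‖)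
    (hGgrad : ∀ x, HasGradientAt G (gx x (ystar x)) x)
    (hGlip : ∀ x₁ x₂, ‖gx x₁ (ystar x₁) - gx x₂ (ystar x₂)‖ ≤ LG * ‖x₁ - x₂‖)
    (x x' : E) (y : F) :
    g x' y - G x' ≤ g x y - G x + L * ‖y - ystar x‖ * ‖x' - x‖ + (L + LG) / 2 * ‖x' - x‖ ^ 2 := by
  have hg := image_le_add_inner_add_sq_of_lipschitz_gradient (hgx · y) (hgxlipx · · y) x x'
  have hG := add_inner_sub_sq_le_image_of_lipschitz_gradient hGgrad hGlip x x'
  have hcross : ⟪gx x y, x' - x⟫ - ⟪gx x (ystar x), x' - x⟫ ≤ L * ‖y - ystar x‖ * ‖x' - x‖ := by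
    rw [← inner_sub_left]
    exact (real_inner_le_norm _ _).trans
      (mul_le_mul_of_nonneg_right (hgxlipy x y (ystar x)) (norm_nonneg _))
  linarith

end InnerProductSpace

theorem hypergradient_error_term_le {e D δ μ Lhat ρ ρu γ lam : ℝ} (hμ : 0 < μ)
    (hLhat : 0 < Lhat) (hρ : 0 < ρ) (hρu : 0 < ρu) (hγ : 0 < γ)
    (hγ2 : γ ≤ ρ * lam * μ ^ 2 / (8 * ρu * Lhat ^ 2)) (he : e ^ 2 ≤ 2 * Lhat ^ 2 / μ * δ) :
    e * D ≤ lam * μ / (4 * ρu) * δ + ρ / (4 * γ) * D ^ 2 := by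
  have hδ : 0 ≤ δ := (mul_nonneg_iff_of_pos_left (by positivity)).1 ((sq_nonneg e).trans he)
  have hcoef : γ / ρ * (2 * Lhat ^ 2 / μ) ≤ lam * μ / (4 * ρu) := by
    rw [le_div_iff₀ (by positivity)] at hγ2
    rw [div_mul_div_comm, div_le_div_iff₀ (by positivity) (by positivity)]
    nlinarith
  calc e * D ≤ 2 * γ / ρ / 2 * e ^ 2 + D ^ 2 / (2 * (2 * γ / ρ)) :=
        mul_le_half_mul_sq_add_sq_div (by positivity)
    _ = γ / ρ * e ^ 2 + ρ / (4 * γ) * D ^ 2 := by field_simp; ring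
    _ ≤ lam * μ / (4 * ρu) * δ + ρ / (4 * γ) * D ^ 2 := by
        nlinarith [mul_le_mul_of_nonneg_left he (by positivity : 0 ≤ γ / ρ),
          mul_le_mul_of_nonneg_right hcoef hδ]

theorem tracking_error_term_le {Lg r D δ μ ρu lam : ℝ} (hμ : 0 < μ) (hρu : 0 < ρu)
    (hlam : 0 < lam) (hr : μ / 2 * r ^ 2 ≤ δ) :
    Lg * r * D ≤ lam * μ / ρu * δ + ρu * Lg ^ 2 / (2 * lam * μ ^ 2) * D ^ 2 :=
  calc Lg * r * D = r * (Lg * D) := by ring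
    _ ≤ lam * μ ^ 2 / ρu / 2 * r ^ 2 + (Lg * D) ^ 2 / (2 * (lam * μ ^ 2 / ρu)) :=
        mul_le_half_mul_sq_add_sq_div (by positivity)
    _ = lam * μ / ρu * (μ / 2 * r ^ 2) + ρu * Lg ^ 2 / (2 * lam * μ ^ 2) * D ^ 2 := by
        field_simp
    _ ≤ lam * μ / ρu * δ + ρu * Lg ^ 2 / (2 * lam * μ ^ 2) * D ^ 2 := by gcongr

theorem stepsize_quadratic_coeff_le {μ Lg LG LF ρ ρu γ lam : ℝ} (hμ : 0 < μ) (hμLg : μ ≤ Lg)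
    (hLG : max Lg (Lg ^ 2 / (2 * μ)) ≤ LG) (hρ : 0 < ρ) (hρ1 : ρ < 1) (hρu : 0 < ρu)
    (hρρu : 1 ≤ ρ * ρu) (hγ : 0 < γ) (hγ1 : γ ≤ 3 * ρ / (4 * LF))
    (hγ3 : γ ≤ lam * μ * ρ / (16 * LG * ρu)) (hlam : 0 < lam)
    (hlamle : lam ≤ 1 / (2 * Lg * ρu)) :
    LF / 2 + (Lg + LG) / 2 + ρu * Lg ^ 2 / (2 * lam * μ ^ 2) ≤ ρ / (2 * γ) := by
  have hLg : 0 < Lg := hμ.trans_le hμLg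
  have hLgLG : Lg ≤ LG := (le_max_left _ _).trans hLG
  have hLg2 : Lg ^ 2 ≤ 2 * μ * LG := by
    have := (le_max_right _ _).trans hLG
    rw [div_le_iff₀ (by positivity)] at this
    linarith
  have hLF : 0 < LF := by
    by_contra! h
    linarith [div_nonpos_of_nonneg_of_nonpos (by positivity : 0 ≤ 3 * ρ) (by linarith : 4 * LF ≤ 0)]
  have hLG0 : 0 < LG := hLg.trans_le hLgLG
  have hρu1 : 1 ≤ ρu := by nlinarith
  rw [le_div_iff₀ (by positivity)] at hγ1 hγ3 hlamle
  have hlamμ : 2 * lam * μ ≤ ρ := by nlinarith [mul_le_mul_of_nonneg_left hμLg hlam.le]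
  have hF : LF / 2 ≤ 3 / 8 * (ρ / γ) := by
    rw [mul_div_assoc', le_div_iff₀ hγ]; linarith
  have hG : (Lg + LG) / 2 ≤ 1 / 32 * (ρ / γ) := by
    rw [mul_div_assoc', le_div_iff₀ hγ]
    nlinarith [mul_le_mul_of_nonneg_left hLgLG hγ.le,
      mul_le_mul_of_nonneg_left hρu1 (by positivity : 0 ≤ γ * LG),
      mul_le_mul_of_nonneg_right hlamμ hρ.le, mul_le_mul_of_nonneg_right hρ1.le hρ.le]
  have hT : ρu * Lg ^ 2 / (2 * lam * μ ^ 2) ≤ 1 / 16 * (ρ / γ) := by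
    rw [mul_div_assoc', div_le_div_iff₀ (by positivity) hγ]
    nlinarith [mul_le_mul_of_nonneg_left hLg2 (by positivity : 0 ≤ ρu * γ),
      mul_le_mul_of_nonneg_left hγ3 hμ.le]
  have hhalf : ρ / (2 * γ) = 1 / 2 * (ρ / γ) := by ring
  linarith [div_pos hρ hγ]

theorem stmt_17_general {d p : ℕ} (μ Lg LG LF Lhat ρ ρu γ lam : ℝ)
    (hμ : 0 < μ) (hμLg : μ ≤ Lg) (hLG : max Lg (Lg ^ 2 / (2 * μ)) ≤ LG)
    (hLhat : 0 < Lhat)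
    (hρ : 0 < ρ) (hρ1 : ρ < 1) (hρu : 0 < ρu) (hρρu : 1 ≤ ρ * ρu)
    -- lower-level objective and its partial gradients:
    (g : EuclideanSpace ℝ (Fin d) → EuclideanSpace ℝ (Fin p) → ℝ)
    (gx : EuclideanSpace ℝ (Fin d) → EuclideanSpace ℝ (Fin p) → EuclideanSpace ℝ (Fin d))
    (gy : EuclideanSpace ℝ (Fin d) → EuclideanSpace ℝ (Fin p) → EuclideanSpace ℝ (Fin p))
    (hgx : ∀ x y, HasGradientAt (fun x' => g x' y) (gx x y) x)
    (hgy : ∀ x y, HasGradientAt (fun y' => g x y') (gy x y) y)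
    (hgxlipy : ∀ x y₁ y₂, ‖gx x y₁ - gx x y₂‖ ≤ Lg * ‖y₁ - y₂‖)
    (hgxlipx : ∀ x₁ x₂ y, ‖gx x₁ y - gx x₂ y‖ ≤ Lg * ‖x₁ - x₂‖)
    (hgylipy : ∀ x y₁ y₂, ‖gy x y₁ - gy x y₂‖ ≤ Lg * ‖y₁ - y₂‖)
    -- value function `G`, minimizers `y*`, PL and quadratic growth:
    (G : EuclideanSpace ℝ (Fin d) → ℝ)
    (ystar : EuclideanSpace ℝ (Fin d) → EuclideanSpace ℝ (Fin p))
    (hGlow : ∀ x y, G x ≤ g x y)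
    (hPL : ∀ x y, ‖gy x y‖ ^ 2 ≥ 2 * μ * (g x y - G x))
    (hQG : ∀ x y, g x y - G x ≥ (μ / 2) * ‖y - ystar x‖ ^ 2)
    (hGgrad : ∀ x, HasGradientAt G (gx x (ystar x)) x)
    (hGlip : ∀ x₁ x₂, ‖gx x₁ (ystar x₁) - gx x₂ (ystar x₂)‖ ≤ LG * ‖x₁ - x₂‖)
    -- upper-level objective `F` and nonsmooth regularizer `h`:
    (F : EuclideanSpace ℝ (Fin d) → ℝ)
    (F' : EuclideanSpace ℝ (Fin d) → EuclideanSpace ℝ (Fin d))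
    (hF : ∀ z, HasGradientAt F (F' z) z)
    (hFlip : ∀ z₁ z₂, ‖F' z₁ - F' z₂‖ ≤ LF * ‖z₁ - z₂‖)
    (h : EuclideanSpace ℝ (Fin d) → ℝ) (hconv : ConvexOn ℝ Set.univ h)
    -- iterates and adaptive matrices:
    (x : ℕ → EuclideanSpace ℝ (Fin d)) (y : ℕ → EuclideanSpace ℝ (Fin p))
    (w : ℕ → EuclideanSpace ℝ (Fin d))
    (A : ℕ → (EuclideanSpace ℝ (Fin d) →L[ℝ] EuclideanSpace ℝ (Fin d)))
    (B : ℕ → (EuclideanSpace ℝ (Fin p) →L[ℝ] EuclideanSpace ℝ (Fin p)))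
    (hApos : ∀ t v', ρ * ‖v'‖ ^ 2 ≤ ⟪A t v', v'⟫)
    (hBsymm : ∀ t v' w', ⟪B t v', w'⟫ = ⟪v', B t w'⟫)
    (hBl : ∀ t v', ρ * ‖v'‖ ^ 2 ≤ ⟪B t v', v'⟫)
    (hBu : ∀ t v', ⟪B t v', v'⟫ ≤ ρu * ‖v'‖ ^ 2)
    -- the AdaPAG updates:
    (hx : ∀ t z, ⟪w t, x (t + 1)⟫
        + (1 / (2 * γ)) * ⟪A t (x (t + 1) - x t), x (t + 1) - x t⟫ + h (x (t + 1))
      ≤ ⟪w t, z⟫ + (1 / (2 * γ)) * ⟪A t (z - x t), z - x t⟫ + h z)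
    (hy : ∀ t, B t (y t - y (t + 1)) = lam • gy (x t) (y t))
    -- hypergradient estimation error bound (Lemma 3):
    (hw : ∀ t, ‖w t - F' (x t)‖ ^ 2 ≤ (2 * Lhat ^ 2 / μ) * (g (x t) (y t) - G (x t)))
    -- step sizes:
    (hγ : 0 < γ) (hγ1 : γ ≤ 3 * ρ / (4 * LF))
    (hγ2 : γ ≤ ρ * lam * μ ^ 2 / (8 * ρu * Lhat ^ 2))
    (hγ3 : γ ≤ lam * μ * ρ / (16 * LG * ρu))
    (hlam : 0 < lam) (hlamle : lam ≤ 1 / (2 * Lg * ρu)) :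
    ∀ t, (F (x (t + 1)) + h (x (t + 1)) + (g (x (t + 1)) (y (t + 1)) - G (x (t + 1))))
        - (F (x t) + h (x t) + (g (x t) (y t) - G (x t)))
      ≤ -(lam * μ / (4 * ρu)) * (g (x t) (y t) - G (x t))
        - (ρ * γ / 4) * ‖γ⁻¹ • (x t - x (t + 1))‖ ^ 2 := by
  intro t
  have hLg : 0 < Lg := hμ.trans_le hμLg
  have hlamLg : 2 * lam * Lg ≤ ρ := by
    rw [le_div_iff₀ (by positivity)] at hlamle
    nlinarith
  have hδ : 0 ≤ g (x t) (y t) - G (x t) := sub_nonneg.2 (hGlow _ _)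
  have hupper := add_sub_le_of_prox_gradient_step hF hFlip hconv (hApos t) hγ (hx t)
  have hgap_x := sub_le_of_lipschitz_partial_gradient hgx hgxlipy hgxlipx hGgrad hGlip
    (x t) (x (t + 1)) (y (t + 1))
  have hgap_y := sub_le_mul_sub_of_preconditioned_gradient_step_of_pl (hgy (x t))
    (hgylipy (x t)) (hBsymm t) (hBl t) (hBu t) hρ hρu hlam hlamLg (hy t) (hPL (x t) (y t))
  have hgap_y_le : lam * μ / ρu * (g (x t) (y (t + 1)) - G (x t))
      ≤ lam * μ / ρu * (g (x t) (y t) - G (x t)) := by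
    gcongr
    nlinarith [mul_nonneg (by positivity : 0 ≤ lam * μ / ρu) hδ]
  have herr := hypergradient_error_term_le (D := ‖x (t + 1) - x t‖) hμ hLhat hρ hρu hγ hγ2 (hw t)
  have htrack := tracking_error_term_le (Lg := Lg) (D := ‖x (t + 1) - x t‖) hμ hρu hlam
    (hQG (x t) (y (t + 1)))
  have hcoef := mul_le_mul_of_nonneg_right (stepsize_quadratic_coeff_le hμ hμLg hLG hρ hρ1 hρu
    hρρu hγ hγ1 hγ3 hlam hlamle) (sq_nonneg ‖x (t + 1) - x t‖)
  have hmap : ρ * γ / 4 * ‖γ⁻¹ • (x t - x (t + 1))‖ ^ 2 = ρ / (4 * γ) * ‖x (t + 1) - x t‖ ^ 2 := by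
    rw [norm_smul, norm_inv, Real.norm_of_nonneg hγ.le, norm_sub_rev]
    field_simp
  rw [hmap]
  linear_combination hupper + hgap_x + hgap_y + hgap_y_le + herr + htrack + hcoef

/-- One-step decrease of the Lyapunov function
`Ω_t = Φ(x_t) + g(x_t,y_t) − G(x_t)` for the AdaPAG iterates: under the bilevel
smoothness/PL/quadratic-growth assumptions, the adaptive mirror-descent updates with
`A_t ⪰ ρ I`, `ρ_l I ⪯ B_t ⪯ ρ_u I` (`ρ_l = ρ ∈ (0,1)`, `ρ_l ρ_u ≥ 1`), the hypergradient
estimation bound `‖w_t − ∇F(x_t)‖² ≤ (2L̂²/μ)(g(x_t,y_t) − G(x_t))`, and the stated step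
size restrictions, one has
`Ω_{t+1} − Ω_t ≤ −(λμ/(4ρ_u))(g(x_t,y_t) − G(x_t)) − (ργ/4)‖𝒢(x_t,w_t,γ)‖²`, where
`𝒢(x_t,w_t,γ) = (x_t − x_{t+1})/γ`. -/
theorem stmt_17 {d p : ℕ} (μ Lg LG LF Lhat ρ ρu γ lam : ℝ)
    (hμ : 0 < μ) (hμLg : μ ≤ Lg) (hLG : max Lg (Lg ^ 2 / (2 * μ)) ≤ LG)
    (hLhat : 0 < Lhat)
    (hρ : 0 < ρ) (hρ1 : ρ < 1) (hρu : 0 < ρu) (hρρu : 1 ≤ ρ * ρu)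
    -- lower-level objective and its partial gradients:
    (g : EuclideanSpace ℝ (Fin d) → EuclideanSpace ℝ (Fin p) → ℝ)
    (gx : EuclideanSpace ℝ (Fin d) → EuclideanSpace ℝ (Fin p) → EuclideanSpace ℝ (Fin d))
    (gy : EuclideanSpace ℝ (Fin d) → EuclideanSpace ℝ (Fin p) → EuclideanSpace ℝ (Fin p))
    (hgx : ∀ x y, HasGradientAt (fun x' => g x' y) (gx x y) x)
    (hgy : ∀ x y, HasGradientAt (fun y' => g x y') (gy x y) y)
    (hgxlipy : ∀ x y₁ y₂, ‖gx x y₁ - gx x y₂‖ ≤ Lg * ‖y₁ - y₂‖)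
    (hgxlipx : ∀ x₁ x₂ y, ‖gx x₁ y - gx x₂ y‖ ≤ Lg * ‖x₁ - x₂‖)
    (hgylipy : ∀ x y₁ y₂, ‖gy x y₁ - gy x y₂‖ ≤ Lg * ‖y₁ - y₂‖)
    (hgylipx : ∀ x₁ x₂ y, ‖gy x₁ y - gy x₂ y‖ ≤ Lg * ‖x₁ - x₂‖)
    -- value function `G`, minimizers `y*`, PL and quadratic growth:
    (G : EuclideanSpace ℝ (Fin d) → ℝ)
    (ystar : EuclideanSpace ℝ (Fin d) → EuclideanSpace ℝ (Fin p))
    (hGval : ∀ x, g x (ystar x) = G x) (hGlow : ∀ x y, G x ≤ g x y)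
    (hPL : ∀ x y, ‖gy x y‖ ^ 2 ≥ 2 * μ * (g x y - G x))
    (hQG : ∀ x y, g x y - G x ≥ (μ / 2) * ‖y - ystar x‖ ^ 2)
    (hGgrad : ∀ x, HasGradientAt G (gx x (ystar x)) x)
    (hGlip : ∀ x₁ x₂, ‖gx x₁ (ystar x₁) - gx x₂ (ystar x₂)‖ ≤ LG * ‖x₁ - x₂‖)
    -- upper-level objective `F` and nonsmooth regularizer `h`:
    (F : EuclideanSpace ℝ (Fin d) → ℝ)
    (F' : EuclideanSpace ℝ (Fin d) → EuclideanSpace ℝ (Fin d))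
    (hF : ∀ z, HasGradientAt F (F' z) z)
    (hFlip : ∀ z₁ z₂, ‖F' z₁ - F' z₂‖ ≤ LF * ‖z₁ - z₂‖)
    (h : EuclideanSpace ℝ (Fin d) → ℝ) (hconv : ConvexOn ℝ Set.univ h)
    -- iterates and adaptive matrices:
    (x : ℕ → EuclideanSpace ℝ (Fin d)) (y : ℕ → EuclideanSpace ℝ (Fin p))
    (w : ℕ → EuclideanSpace ℝ (Fin d))
    (A : ℕ → (EuclideanSpace ℝ (Fin d) →L[ℝ] EuclideanSpace ℝ (Fin d)))
    (B : ℕ → (EuclideanSpace ℝ (Fin p) →L[ℝ] EuclideanSpace ℝ (Fin p)))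
    (hAsymm : ∀ t v' w', ⟪A t v', w'⟫ = ⟪v', A t w'⟫)
    (hApos : ∀ t v', ρ * ‖v'‖ ^ 2 ≤ ⟪A t v', v'⟫)
    (hBsymm : ∀ t v' w', ⟪B t v', w'⟫ = ⟪v', B t w'⟫)
    (hBl : ∀ t v', ρ * ‖v'‖ ^ 2 ≤ ⟪B t v', v'⟫)
    (hBu : ∀ t v', ⟪B t v', v'⟫ ≤ ρu * ‖v'‖ ^ 2)
    -- the AdaPAG updates:
    (hx : ∀ t z, ⟪w t, x (t + 1)⟫
        + (1 / (2 * γ)) * ⟪A t (x (t + 1) - x t), x (t + 1) - x t⟫ + h (x (t + 1))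
      ≤ ⟪w t, z⟫ + (1 / (2 * γ)) * ⟪A t (z - x t), z - x t⟫ + h z)
    (hy : ∀ t, B t (y t - y (t + 1)) = lam • gy (x t) (y t))
    -- hypergradient estimation error bound (Lemma 3):
    (hw : ∀ t, ‖w t - F' (x t)‖ ^ 2 ≤ (2 * Lhat ^ 2 / μ) * (g (x t) (y t) - G (x t)))
    -- step sizes:
    (hγ : 0 < γ) (hγ1 : γ ≤ 3 * ρ / (4 * LF))
    (hγ2 : γ ≤ ρ * lam * μ ^ 2 / (8 * ρu * Lhat ^ 2))
    (hγ3 : γ ≤ lam * μ * ρ / (16 * LG * ρu))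
    (hγ4 : γ ≤ μ * ρ / (16 * Lg ^ 2 * ρu))
    (hlam : 0 < lam) (hlamle : lam ≤ 1 / (2 * Lg * ρu)) :
    ∀ t, (F (x (t + 1)) + h (x (t + 1)) + (g (x (t + 1)) (y (t + 1)) - G (x (t + 1))))
        - (F (x t) + h (x t) + (g (x t) (y t) - G (x t)))
      ≤ -(lam * μ / (4 * ρu)) * (g (x t) (y t) - G (x t))
        - (ρ * γ / 4) * ‖γ⁻¹ • (x t - x (t + 1))‖ ^ 2 :=
  stmt_17_general μ Lg LG LF Lhat ρ ρu γ lam hμ hμLg hLG hLhat hρ hρ1 hρu hρρu g gx gy hgx hgy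
    hgxlipy hgxlipx hgylipy G ystar hGlow hPL hQG hGgrad hGlip F F' hF hFlip h hconv x y w A B hApos
    hBsymm hBl hBu hx hy hw hγ hγ1 hγ2 hγ3 hlam hlamle
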